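/- arXiv:0802.0679 — 4 statements merged into one kernel-verified Lean document; each statement's English description precedes it below -/
import Mathlib

section
/- Let X be a Hilbert space and let S_1, ..., S_p be pairwise commuting bounded operators on X with ||S_j|| ≤ 1 for each j. Let (λ_1, ..., λ_p) ∈ 𝕋^p be such that each operator Id − λ_j S_j is injective, and for each j let (λ_j^{(n)})_n be a sequence in 𝔻 tending to λ_j nontangentially as n → ∞. If y ∈ X is such that the sequence w_n := (Id − λ_1^{(n)} S_1)^{-1} ⋯ (Id − λ_p^{(n)} S_p)^{-1} y is uniformly bounded in norm, then y belongs to the range of the operator (Id − λ_1 S_1) ⋯ (Id − λ_p S_p). -/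
open Complex Filter Topology

noncomputable section

/-! The products `Aₙ = ∏ (Id - λ_j⁽ⁿ⁾ S_j)` converge in operator norm to `A = ∏ (Id - λ_j S_j)`,
so `A wₙ = y - (Aₙ - A) wₙ → y` because `(wₙ)` is bounded. By Riesz representation and
Banach–Alaoglu, the bounded sequence `(wₙ)` has a weak limit `x` along an ultrafilter finer than
`atTop`; as `A` is weakly continuous and the weak topology is Hausdorff, `A x = y`. -/

section WeakCompactness

open InnerProductSpace ComplexConjugate

variable {𝕜 E F : Type*} [RCLike 𝕜]
  [NormedAddCommGroup E] [InnerProductSpace 𝕜 E] [CompleteSpace E]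
  [NormedAddCommGroup F] [NormedSpace 𝕜 F]

theorem exists_tendsto_toWeakSpace_of_norm_le {ι : Type*} (U : Ultrafilter ι) {w : ι → E}
    {C : ℝ} (hw : ∀ i, ‖w i‖ ≤ C) :
    ∃ x : E, Tendsto (fun i => toWeakSpace 𝕜 E (w i)) U (𝓝 (toWeakSpace 𝕜 E x)) := by
  set g : ι → WeakDual 𝕜 E := fun i => StrongDual.toWeakDual (toDual 𝕜 E (w i))
  have hg_mem : ∀ i, g i ∈ WeakDual.toStrongDual ⁻¹' Metric.closedBall 0 C := fun i => by
    simpa [g] using hw i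
  obtain ⟨g₀, -, hg⟩ := (WeakDual.isCompact_closedBall (0 : StrongDual 𝕜 E) C).ultrafilter_le_nhds
    (U.map g) (le_principal_iff.mpr (mem_map.mpr (Eventually.of_forall hg_mem)))
  refine ⟨(toDual 𝕜 E).symm (WeakDual.toStrongDual g₀), ?_⟩
  refine (WeakBilin.tendsto_iff_forall_eval_tendsto (topDualPairing 𝕜 E).flip fun _ _ h =>
    SeparatingDual.eq_iff_forall_dual_eq.mpr (DFunLike.congr_fun h)).mpr fun f => ?_
  set v := (toDual 𝕜 E).symm f
  have hf : ∀ u, f u = conj (toDual 𝕜 E u v) := fun u => by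
    rw [toDual_apply_apply, inner_conj_symm, toDual_symm_apply]
  change Tendsto (fun i => f (w i)) U (𝓝 (f ((toDual 𝕜 E).symm (WeakDual.toStrongDual g₀))))
  simp_rw [hf, LinearIsometryEquiv.apply_symm_apply]
  exact (RCLike.continuous_conj.tendsto _).comp ((WeakDual.eval_continuous v).tendsto g₀ |>.comp hg)

theorem mem_range_of_tendsto_of_apply_eq {ι : Type*} {l : Filter ι} [l.NeBot]
    {A : E →L[𝕜] F} {B : ι → E →L[𝕜] F} (hB : Tendsto B l (𝓝 A)) {w : ι → E} {C : ℝ}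
    (hw : ∀ i, ‖w i‖ ≤ C) {y : F} (hy : ∀ i, B i (w i) = y) : y ∈ Set.range A := by
  have hAw : Tendsto (fun i => A (w i)) l (𝓝 y) := by
    have hdefect : Tendsto (fun i => (B i - A) (w i)) l (𝓝 0) :=
      (tendsto_sub_nhds_zero_iff.mpr hB).op_zero_isBoundedUnder_le
        (isBoundedUnder_of ⟨C, hw⟩) (fun T u => T u) (fun T u => T.le_opNorm u)
    simpa [hy] using (tendsto_const_nhds (x := y)).sub hdefect
  obtain ⟨U, hU⟩ := Ultrafilter.exists_le l
  obtain ⟨x, hx⟩ := exists_tendsto_toWeakSpace_of_norm_le (𝕜 := 𝕜) U hw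
  have hweak : Tendsto (fun i => toWeakSpace 𝕜 F (A (w i))) U (𝓝 (toWeakSpace 𝕜 F (A x))) :=
    ((WeakSpace.map A).continuous.tendsto _).comp hx
  have hstrong : Tendsto (fun i => toWeakSpace 𝕜 F (A (w i))) U (𝓝 (toWeakSpace 𝕜 F y)) :=
    ((toWeakSpaceCLM 𝕜 F).continuous.tendsto y).comp (hAw.mono_left hU)
  exact ⟨x, (toWeakSpace 𝕜 F).injective (tendsto_nhds_unique hweak hstrong)⟩

end WeakCompactness

theorem statement_0_general {X : Type*} [NormedAddCommGroup X] [InnerProductSpace ℂ X]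
    [CompleteSpace X] (p : ℕ)
    (S : Fin p → X →L[ℂ] X)
    (lam : Fin p → ℂ)
    (lamn : ℕ → Fin p → ℂ)
    (htend : ∀ j, Tendsto (fun n => lamn n j) atTop (𝓝 (lam j)))
    (y : X) (w : ℕ → X)
    -- `w n` is the vector `(Id - λ₁⁽ⁿ⁾S₁)⁻¹ ⋯ (Id - λ_p⁽ⁿ⁾S_p)⁻¹ y` (each factor is
    -- invertible since `|λ_j⁽ⁿ⁾| ‖S_j‖ < 1`):
    (hw : ∀ n, (List.ofFn (fun j => (1 : X →L[ℂ] X) - lamn n j • S j)).prod (w n) = y)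
    (hbdd : ∃ C : ℝ, ∀ n, ‖w n‖ ≤ C) :
    y ∈ Set.range ⇑((List.ofFn (fun j => (1 : X →L[ℂ] X) - lam j • S j)).prod) := by
  obtain ⟨C, hC⟩ := hbdd
  refine mem_range_of_tendsto_of_apply_eq (l := atTop) ?_ hC hw
  simp only [List.ofFn_eq_map]
  exact tendsto_list_prod _ fun j _ => tendsto_const_nhds.sub ((htend j).smul_const (S j))

theorem statement_0 {X : Type*} [NormedAddCommGroup X] [InnerProductSpace ℂ X]
    [CompleteSpace X] (p : ℕ)
    (S : Fin p → X →L[ℂ] X)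
    (hcomm : ∀ i j, S i ∘L S j = S j ∘L S i)
    (hnorm : ∀ j, ‖S j‖ ≤ 1)
    (lam : Fin p → ℂ) (hlam : ∀ j, ‖lam j‖ = 1)
    (hinj : ∀ j, Function.Injective ⇑((1 : X →L[ℂ] X) - lam j • S j))
    (lamn : ℕ → Fin p → ℂ) (hlamn : ∀ n j, ‖lamn n j‖ < 1)
    (htend : ∀ j, Tendsto (fun n => lamn n j) atTop (𝓝 (lam j)))
    (hnontan : ∀ j, ∃ C : ℝ, ∀ n,
      ‖lam j - lamn n j‖ ≤ C * (1 - ‖lamn n j‖))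
    (y : X) (w : ℕ → X)
    -- `w n` is the vector `(Id - λ₁⁽ⁿ⁾S₁)⁻¹ ⋯ (Id - λ_p⁽ⁿ⁾S_p)⁻¹ y` (each factor is
    -- invertible since `|λ_j⁽ⁿ⁾| ‖S_j‖ < 1`):
    (hw : ∀ n, (List.ofFn (fun j => (1 : X →L[ℂ] X) - lamn n j • S j)).prod (w n) = y)
    (hbdd : ∃ C : ℝ, ∀ n, ‖w n‖ ≤ C) :
    y ∈ Set.range ⇑((List.ofFn (fun j => (1 : X →L[ℂ] X) - lam j • S j)).prod) :=
  statement_0_general p S lam lamn htend y w hw hbdd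
end
end

section
/- Let N be a non-negative integer, let R₀ > 1, and let b be in the closed unit ball of H^∞(𝔻) admitting an analytic extension to a neighborhood of the interval [0, R₀] which has 2N+1 continuous derivatives on [0, R₀], satisfies b(z) · conj(b(1/conj(z))) = 1 where defined, and has no zeros in the interval (1/R₀, 1). For r ∈ (1/R₀, 1) define h_{r,N}^b(z) = N! z^N − b(z) ∑_{j=0}^N binom(N,j) conj(b^{(j)}(r)) (N−j)! z^{N−j} (1 − r z)^j. Then h_{r,N}^b and its first N derivatives all vanish at the point z = 1/r. -/
/-!
The reflection `G w = conj (b (conj w))` is analytic near `r`, and the functional equation says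
`b z * G z⁻¹ = 1` near `1 / r`. The sum in `h_{r,N}^b` is `N! z^N T(z⁻¹)`, where `T` is the Taylor
polynomial of order `N` of `G` at `r`. Writing `G w = T(w) + (w - r)^(N+1) F(w)` with `F` analytic,
`h_{r,N}^b z = N! z^N b(z) (z⁻¹ - r)^(N+1) F(z⁻¹)`, and since `z⁻¹ - r = -r (z - 1/r) / z` this has
a zero of order at least `N + 1` at `1 / r`.
-/

open Complex Filter Set Metric Topology

noncomputable section

/-- The open unit disc `𝔻 ⊆ ℂ`. -/
def openUnitDisc : Set ℂ := Metric.ball 0 1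

open ComplexConjugate

section

variable {𝕜 E : Type*} [NontriviallyNormedField 𝕜] [CharZero 𝕜]
  [NormedAddCommGroup E] [NormedSpace 𝕜 E] [CompleteSpace E]

theorem AnalyticAt.exists_eq_sum_add_sub_pow_mul {f : 𝕜 → E} {c : 𝕜} (hf : AnalyticAt 𝕜 f c)
    (n : ℕ) :
    ∃ F : 𝕜 → E, AnalyticAt 𝕜 F c ∧ ∀ z, f z =
      (∑ i ∈ Finset.range n, ((z - c) ^ i / i.factorial) • iteratedDeriv i f c) +
        (z - c) ^ n • F z := by
  have hf₀ : AnalyticAt 𝕜 (fun z ↦ f (c + z)) 0 := by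
    refine AnalyticAt.comp (g := f) ?_ (by fun_prop)
    simpa using hf
  obtain ⟨F, hF, hfF⟩ := hf₀.exists_eq_sum_add_pow_mul n
  refine ⟨fun z ↦ F (z - c), AnalyticAt.comp (g := F) (by simpa using hF) (by fun_prop), fun z ↦ ?_⟩
  simpa [iteratedDeriv_comp_const_add] using hfF (z - c)

theorem iteratedDeriv_eq_zero_of_eventuallyEq_sub_pow_smul {f g : 𝕜 → E} {c : 𝕜} {n j : ℕ}
    (hg : AnalyticAt 𝕜 g c) (hfg : f =ᶠ[𝓝 c] fun z ↦ (z - c) ^ n • g z) (hj : j < n) :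
    iteratedDeriv j f c = 0 := by
  have hpow : AnalyticAt 𝕜 (fun z ↦ (z - c) ^ n • g z) c := by fun_prop
  rw [hfg.iteratedDeriv_eq]
  exact (natCast_le_analyticOrderAt_iff_iteratedDeriv_eq_zero hpow).1
    ((natCast_le_analyticOrderAt hpow).2 ⟨g, hg, .of_forall fun _ ↦ rfl⟩) j hj

end

theorem iteratedDeriv_conj_conj {𝕜 : Type*} [NontriviallyNormedField 𝕜] [StarRing 𝕜]
    [NormedStarGroup 𝕜] (f : 𝕜 → 𝕜) (n : ℕ) :
    iteratedDeriv n (conj ∘ f ∘ conj) = conj ∘ iteratedDeriv n f ∘ conj := by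
  induction n with
  | zero => simp
  | succ n ih => rw [iteratedDeriv_succ, ih, deriv_conj_conj, iteratedDeriv_succ]

theorem AnalyticAt.conj_conj {f : ℂ → ℂ} {x : ℂ} (hf : AnalyticAt ℂ f (conj x)) :
    AnalyticAt ℂ (conj ∘ f ∘ conj) x := by
  rw [analyticAt_iff_eventually_differentiableAt] at hf ⊢
  have hconj : Tendsto conj (𝓝 x) (𝓝 (conj x)) := continuous_conj.tendsto x
  filter_upwards [hconj.eventually hf] with z hz
  exact differentiableAt_conj_conj_iff.2 hz

theorem factorial_mul_pow_mul_sum_inv_sub_pow {K : Type*} [Field K] [CharZero K] (N : ℕ)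
    (a : ℕ → K) (r : K) {z : K} (hz : z ≠ 0) :
    (N.factorial : K) * z ^ N * ∑ i ∈ Finset.range (N + 1), ((z⁻¹ - r) ^ i / i.factorial) * a i =
      ∑ i ∈ Finset.range (N + 1), (N.choose i : K) * a i * (N - i).factorial * z ^ (N - i) *
        (1 - r * z) ^ i := by
  rw [Finset.mul_sum]
  refine Finset.sum_congr rfl fun i hi ↦ ?_
  have hiN : i ≤ N := Nat.lt_succ_iff.1 (Finset.mem_range.1 hi)
  have hfact : (N.factorial : K) = N.choose i * (N - i).factorial * i.factorial := by
    rw [← Nat.choose_mul_factorial_mul_factorial hiN]; push_cast; ring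
  have hpow : z ^ N * (z⁻¹ - r) ^ i = z ^ (N - i) * (1 - r * z) ^ i := by
    rw [← Nat.sub_add_cancel hiN, pow_add, Nat.add_sub_cancel, mul_assoc, ← mul_pow]
    congr 2
    field_simp
  have hcancel : (i.factorial : K) * (i.factorial : K)⁻¹ = 1 :=
    mul_inv_cancel₀ (Nat.cast_ne_zero.2 i.factorial_ne_zero)
  rw [hfact, div_eq_mul_inv]
  linear_combination (N.choose i : K) * (N - i).factorial * a i *
    (z ^ N * (z⁻¹ - r) ^ i * hcancel + hpow)

theorem pow_mul_inv_sub_pow_succ {K : Type*} [Field K] (N : ℕ) {r z : K} (hr : r ≠ 0)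
    (hz : z ≠ 0) :
    z ^ N * (z⁻¹ - r) ^ (N + 1) = (z - r⁻¹) ^ (N + 1) * ((-r) ^ (N + 1) * z⁻¹) := by
  have : z⁻¹ - r = -r * (z - r⁻¹) * z⁻¹ := by field_simp; ring
  rw [this, mul_pow, mul_pow, pow_succ z⁻¹, inv_pow]
  field_simp

theorem iteratedDeriv_factorial_mul_pow_sub_mul_taylor_eq_zero {𝕜 : Type*}
    [NontriviallyNormedField 𝕜] [CharZero 𝕜] [CompleteSpace 𝕜] {b G : 𝕜 → 𝕜} {r : 𝕜}
    (hr : r ≠ 0) (hb : AnalyticAt 𝕜 b r⁻¹) (hG : AnalyticAt 𝕜 G r)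
    (hbG : ∀ᶠ z in 𝓝 r⁻¹, b z * G z⁻¹ = 1) {N j : ℕ} (hj : j ≤ N) :
    iteratedDeriv j (fun z ↦ (N.factorial : 𝕜) * z ^ N - b z * ∑ i ∈ Finset.range (N + 1),
      (N.choose i : 𝕜) * iteratedDeriv i G r * (N - i).factorial * z ^ (N - i) * (1 - r * z) ^ i)
      r⁻¹ = 0 := by
  obtain ⟨F, hF, hTaylor⟩ := hG.exists_eq_sum_add_sub_pow_mul (N + 1)
  have hr' : r⁻¹ ≠ 0 := inv_ne_zero hr
  have hFinv : AnalyticAt 𝕜 (fun z ↦ F z⁻¹) r⁻¹ :=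
    AnalyticAt.comp (g := F) (by rwa [inv_inv]) (analyticAt_inv hr')
  have hcofactor : AnalyticAt 𝕜 (fun z ↦ (-r) ^ (N + 1) * z⁻¹ * N.factorial * b z * F z⁻¹) r⁻¹ :=
    (((analyticAt_const.mul (analyticAt_inv hr')).mul analyticAt_const).mul hb).mul hFinv
  refine iteratedDeriv_eq_zero_of_eventuallyEq_sub_pow_smul (n := N + 1) hcofactor ?_ (by omega)
  filter_upwards [hbG, eventually_ne_nhds hr'] with z hbGz hz
  rw [hTaylor] at hbGz
  simp only [smul_eq_mul] at hbGz ⊢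
  rw [← factorial_mul_pow_mul_sum_inv_sub_pow N _ _ hz]
  linear_combination -((N.factorial : 𝕜) * z ^ N) * hbGz +
    (N.factorial * b z * F z⁻¹) * pow_mul_inv_sub_pow_succ N hr hz

theorem statement_12_general (N : ℕ) (R0 : ℝ) (hR0 : 1 < R0)
    (b : ℂ → ℂ) (U : Set ℂ) (hU : IsOpen U)
    (hUIcc : (fun x : ℝ => (x : ℂ)) '' Set.Icc (0 : ℝ) R0 ⊆ U)
    (hb_diff : DifferentiableOn ℂ b (openUnitDisc ∪ U))
    -- the functional equation `b z * conj (b (1 / conj z)) = 1` where defined: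
    (hfe : ∀ z ∈ U, z ≠ 0 → ((starRingEnd ℂ) z)⁻¹ ∈ U →
      b z * (starRingEnd ℂ) (b (((starRingEnd ℂ) z)⁻¹)) = 1)
    (r : ℝ) (hr : r ∈ Set.Ioo (1 / R0) 1) :
    -- `h_{r,N}^b` and its first `N` derivatives vanish at `z = 1/r`:
    ∀ j ≤ N, iteratedDeriv j
      (fun z : ℂ => (Nat.factorial N : ℂ) * z ^ N - b z * ∑ i ∈ Finset.range (N + 1),
        (N.choose i : ℂ) * (starRingEnd ℂ) (iteratedDeriv i b (r : ℂ)) * (Nat.factorial (N - i) : ℂ) *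
          z ^ (N - i) * (1 - (r : ℂ) * z) ^ i)
      ((r⁻¹ : ℝ) : ℂ) = 0 := by
  intro j hj
  have hr₀ : 0 < r := lt_trans (one_div_pos.2 (by linarith)) hr.1
  have hrC : (r : ℂ) ≠ 0 := ofReal_ne_zero.2 hr₀.ne'
  have hrU : (r : ℂ) ∈ U := hUIcc ⟨r, ⟨hr₀.le, by linarith [hr.2]⟩, rfl⟩
  have hcU : (r : ℂ)⁻¹ ∈ U := by
    rw [← ofReal_inv]
    exact hUIcc ⟨r⁻¹, ⟨by positivity, inv_le_of_inv_le₀ (by positivity) (by simpa using hr.1.le)⟩, rfl⟩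
  have hb : AnalyticOnNhd ℂ b U := (hb_diff.mono subset_union_right).analyticOnNhd hU
  have hreflect : ∀ᶠ z in 𝓝 (r : ℂ)⁻¹, (conj z)⁻¹ ∈ U := by
    have hcont : ContinuousAt (fun z ↦ (conj z)⁻¹) (r : ℂ)⁻¹ :=
      continuous_conj.continuousAt.inv₀ (by simpa using hrC)
    exact hcont.preimage_mem_nhds (by simpa using hU.mem_nhds hrU)
  have hbG : ∀ᶠ z in 𝓝 (r : ℂ)⁻¹, b z * (conj ∘ b ∘ conj) z⁻¹ = 1 := by
    filter_upwards [hU.mem_nhds hcU, eventually_ne_nhds (inv_ne_zero hrC), hreflect]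
      with z hzU hz₀ hz'U
    simpa using hfe z hzU hz₀ hz'U
  have hG : AnalyticAt ℂ (conj ∘ b ∘ conj) r := .conj_conj (by simpa using hb _ hrU)
  simpa [iteratedDeriv_conj_conj] using
    iteratedDeriv_factorial_mul_pow_sub_mul_taylor_eq_zero hrC (hb _ hcU) hG hbG hj

theorem statement_12 (N : ℕ) (R0 : ℝ) (hR0 : 1 < R0)
    (b : ℂ → ℂ) (U : Set ℂ) (hU : IsOpen U)
    (hUIcc : (fun x : ℝ => (x : ℂ)) '' Set.Icc (0 : ℝ) R0 ⊆ U)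
    (hb_diff : DifferentiableOn ℂ b (openUnitDisc ∪ U))
    (hb_bound : ∀ z ∈ openUnitDisc, ‖b z‖ ≤ 1)
    -- the functional equation `b z * conj (b (1 / conj z)) = 1` where defined:
    (hfe : ∀ z ∈ U, z ≠ 0 → ((starRingEnd ℂ) z)⁻¹ ∈ U →
      b z * (starRingEnd ℂ) (b (((starRingEnd ℂ) z)⁻¹)) = 1)
    -- `b` has no zeros in the real interval `(1/R₀, 1)`:
    (hnz : ∀ x : ℝ, x ∈ Set.Ioo (1 / R0) 1 → b (x : ℂ) ≠ 0)
    (r : ℝ) (hr : r ∈ Set.Ioo (1 / R0) 1) :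
    -- `h_{r,N}^b` and its first `N` derivatives vanish at `z = 1/r`:
    ∀ j ≤ N, iteratedDeriv j
      (fun z : ℂ => (Nat.factorial N : ℂ) * z ^ N - b z * ∑ i ∈ Finset.range (N + 1),
        (N.choose i : ℂ) * (starRingEnd ℂ) (iteratedDeriv i b (r : ℂ)) * (Nat.factorial (N - i) : ℂ) *
          z ^ (N - i) * (1 - (r : ℂ) * z) ^ i)
      ((r⁻¹ : ℝ) : ℂ) = 0 :=
  statement_12_general N R0 hR0 b U hU hUIcc hb_diff hfe r hr
end
end

section
/- Let b be in the closed unit ball of H^∞(𝔻), let ζ_0 ∈ 𝕋 and let β ∈ ℂ with |β| ≤ 1. Suppose b(rζ_0) → β as r → 1⁻ and that the function z ↦ (1 − conj(β) b(z))/(1 − conj(ζ_0) z) belongs to H²(𝔻). Then |β| = 1. -/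
/-! If `‖β‖ < 1`, the numerator `1 - conj β * b` stays at distance `≥ 1 - ‖β‖` from `0` on the disc,
so the function dominates `(1 - ‖β‖) / |1 - conj ζ₀ z|`, and this kernel is not in `H²`: on the arc
of length `1 - r` of the circle of radius `r` starting at the argument of `ζ₀` one has
`|1 - conj ζ₀ z| ≤ 2 (1 - r)`, so the integral mean over that circle is at least
`(1 - ‖β‖)² / (4 (1 - r))`, which is unbounded as `r → 1`. -/

open Complex Filter Set Metric Topology

noncomputable section

open ComplexConjugate

theorem Function.Periodic.mul_le_intervalIntegral {F : ℝ → ℝ} {T δ M : ℝ}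
    (hper : F.Periodic T) (hcont : Continuous F) (hnonneg : 0 ≤ F) (hδ : 0 ≤ δ) (hδT : δ ≤ T)
    (θ : ℝ) (hM : ∀ t ∈ Icc θ (θ + δ), M ≤ F t) :
    δ * M ≤ ∫ t in (0:ℝ)..T, F t :=
  calc δ * M = ∫ _ in θ..θ + δ, M := by simp
    _ ≤ ∫ t in θ..θ + δ, F t :=
      intervalIntegral.integral_mono_on (by linarith) intervalIntegrable_const
        (hcont.intervalIntegrable _ _) hM
    _ ≤ ∫ t in θ..θ + T, F t :=
      intervalIntegral.integral_mono_interval le_rfl (by linarith) (by linarith)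
        (Eventually.of_forall hnonneg) (hcont.intervalIntegrable _ _)
    _ = ∫ t in (0:ℝ)..T, F t := by rw [hper.intervalIntegral_add_eq θ 0, zero_add]

theorem Complex.norm_one_sub_ofReal_mul_exp_I_mul_le {r : ℝ} (hr₀ : 0 ≤ r) (hr₁ : r ≤ 1)
    (s : ℝ) : ‖1 - r * exp (I * s)‖ ≤ (1 - r) + |s| :=
  calc ‖1 - r * exp (I * s)‖ = ‖((1 - r : ℝ) : ℂ) - r * (exp (I * s) - 1)‖ := by
        push_cast; ring_nf
    _ ≤ ‖((1 - r : ℝ) : ℂ)‖ + ‖(r : ℂ) * (exp (I * s) - 1)‖ := norm_sub_le _ _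
    _ ≤ (1 - r) + 1 * |s| := by
      rw [norm_mul, Complex.norm_real, Complex.norm_real, Real.norm_of_nonneg hr₀,
        Real.norm_of_nonneg (by linarith)]
      gcongr
      simpa using Real.norm_exp_I_mul_ofReal_sub_one_le (x := s)
    _ = (1 - r) + |s| := by ring

theorem Complex.conj_mul_exp_I_mul {ζ : ℂ} (hζ : ‖ζ‖ = 1) (t : ℝ) :
    conj ζ * exp (I * t) = exp (I * ↑(t - arg ζ)) := by
  have hζexp : exp (arg ζ * I) = ζ := by simpa [hζ] using norm_mul_exp_arg_mul_I ζ
  conv_lhs => rw [← RCLike.inv_eq_conj hζ, ← hζexp, ← exp_neg, ← exp_add]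
  push_cast; ring_nf

theorem Complex.norm_ofReal_mul_exp_I_mul {r : ℝ} (hr : 0 ≤ r) (t : ℝ) :
    ‖(r : ℂ) * exp (I * t)‖ = r := by
  rw [norm_mul, mul_comm I, norm_exp_ofReal_mul_I, Complex.norm_real, Real.norm_of_nonneg hr,
    mul_one]

theorem sq_div_le_integral_norm_div_one_sub_conj_mul_sq {g : ℂ → ℂ} {ε r : ℝ} {ζ : ℂ}
    (hg : ContinuousOn g (ball 0 1)) (hε : 0 ≤ ε) (hgε : ∀ z ∈ ball 0 1, ε ≤ ‖g z‖)
    (hζ : ‖ζ‖ = 1) (hr : r ∈ Ioo 0 1) :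
    ε ^ 2 / (4 * (1 - r)) ≤ ∫ t in (0:ℝ)..(2 * Real.pi),
      ‖g (r * exp (I * t)) / (1 - conj ζ * (r * exp (I * t)))‖ ^ 2 := by
  obtain ⟨hr₀, hr₁⟩ := hr
  set δ := 1 - r
  have hδ : 0 < δ := by simp only [δ]; linarith
  have hmem : ∀ t : ℝ, (r : ℂ) * exp (I * t) ∈ ball (0 : ℂ) 1 := fun t => by
    rw [mem_ball_zero_iff, norm_ofReal_mul_exp_I_mul hr₀.le]; exact hr₁
  have hden : ∀ t : ℝ, conj ζ * (r * exp (I * t)) = r * exp (I * ↑(t - arg ζ)) := fun t => by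
    rw [mul_left_comm, conj_mul_exp_I_mul hζ]
  have hden_ne : ∀ t : ℝ, 1 - conj ζ * (r * exp (I * t)) ≠ 0 := fun t h => by
    have := norm_ofReal_mul_exp_I_mul hr₀.le (t - arg ζ)
    rw [← hden, ← sub_eq_zero.mp h, norm_one] at this
    linarith
  set Φ : ℂ → ℝ := fun w => ‖g (r * w) / (1 - conj ζ * (r * w))‖ ^ 2
  have hper : (fun t : ℝ => Φ (exp (I * t))).Periodic (2 * Real.pi) := fun t => by
    simpa only [mul_comm I, ofReal_add, ofReal_mul, ofReal_ofNat] using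
      congrArg Φ (exp_mul_I_periodic (t : ℂ))
  have hcont : Continuous fun t : ℝ => Φ (exp (I * t)) := by
    have hz : Continuous fun t : ℝ => (r : ℂ) * exp (I * t) := by fun_prop
    exact ((hg.comp_continuous hz hmem).div
      (continuous_const.sub (continuous_const.mul hz)) hden_ne).norm.pow 2
  have hbound : ∀ t ∈ Icc (arg ζ) (arg ζ + δ), (ε / (2 * δ)) ^ 2 ≤ Φ (exp (I * t)) := by
    intro t ht
    have hden_le : ‖1 - conj ζ * (r * exp (I * t))‖ ≤ 2 * δ := by
      rw [hden]
      calc _ ≤ (1 - r) + |t - arg ζ| := norm_one_sub_ofReal_mul_exp_I_mul_le hr₀.le hr₁.le _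
        _ ≤ 2 * δ := by rw [abs_of_nonneg (by linarith [ht.1])]; linarith [ht.2]
    have hq : ε / (2 * δ) ≤ ‖g (r * exp (I * t)) / (1 - conj ζ * (r * exp (I * t)))‖ := by
      rw [norm_div]
      exact div_le_div₀ (hε.trans (hgε _ (hmem t))) (hgε _ (hmem t))
        (norm_pos_iff.mpr (hden_ne t)) hden_le
    exact pow_le_pow_left₀ (by positivity) hq 2
  calc ε ^ 2 / (4 * δ) = δ * (ε / (2 * δ)) ^ 2 := by field_simp; ring
    _ ≤ _ := hper.mul_le_intervalIntegral hcont (fun t => by positivity) hδ.le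
        (by linarith [Real.pi_gt_three]) (arg ζ) hbound

theorem tendsto_div_one_sub_nhdsLT_one {c : ℝ} (hc : 0 < c) :
    Tendsto (fun r : ℝ => c / (1 - r)) (𝓝[<] 1) atTop := by
  have h : Tendsto (fun r : ℝ => 1 - r) (𝓝[<] 1) (𝓝[>] 0) := by
    refine tendsto_nhdsWithin_of_tendsto_nhds_of_eventually_within _ ?_ ?_
    · simpa using (tendsto_const_nhds.sub tendsto_id : Tendsto (fun r : ℝ => 1 - r) (𝓝 1) _)
        |>.mono_left nhdsWithin_le_nhds
    · filter_upwards [self_mem_nhdsWithin] with r (hr : r < 1) using sub_pos.mpr hr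
  simpa only [div_eq_mul_inv, Function.comp_def] using (tendsto_inv_nhdsGT_zero.comp h).const_mul_atTop hc

theorem statement_13_general (b : ℂ → ℂ)
    (hb_diff : DifferentiableOn ℂ b openUnitDisc)
    (hb_bound : ∀ z ∈ openUnitDisc, ‖b z‖ ≤ 1)
    (ζ0 : ℂ) (hζ0 : ‖ζ0‖ = 1)
    (β : ℂ) (hβ : ‖β‖ ≤ 1)
    -- the function `z ↦ (1 - conj β * b z)/(1 - conj ζ₀ * z)` belongs to `H²(𝔻)`, i.e.
    -- its integral means over circles of radius `r < 1` are uniformly bounded: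
    (hH2 : ∃ C : ℝ, ∀ r ∈ Set.Ioo (0:ℝ) 1,
      (∫ t in (0:ℝ)..(2 * Real.pi),
        ‖(1 - (starRingEnd ℂ) β * b ((r : ℂ) * Complex.exp (Complex.I * (t : ℂ)))) /
          (1 - (starRingEnd ℂ) ζ0 * ((r : ℂ) * Complex.exp (Complex.I * (t : ℂ))))‖ ^ 2) ≤ C) :
    ‖β‖ = 1 := by
  by_contra hne
  have hε : 0 < 1 - ‖β‖ := sub_pos.mpr (hβ.lt_of_ne hne)
  have hnum : ∀ z ∈ ball (0 : ℂ) 1, 1 - ‖β‖ ≤ ‖1 - conj β * b z‖ := fun z hz =>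
    calc 1 - ‖β‖ ≤ ‖(1 : ℂ)‖ - ‖conj β * b z‖ := by
          rw [norm_one, norm_mul, RCLike.norm_conj]
          gcongr
          exact mul_le_of_le_one_right (norm_nonneg _) (hb_bound z hz)
      _ ≤ ‖1 - conj β * b z‖ := norm_sub_norm_le _ _
  have hblowup : Tendsto (fun r : ℝ => (1 - ‖β‖) ^ 2 / (4 * (1 - r))) (𝓝[<] 1) atTop := by
    refine (tendsto_div_one_sub_nhdsLT_one (c := (1 - ‖β‖) ^ 2 / 4) (by positivity)).congr
      fun r => ?_
    rw [div_div]
  obtain ⟨C, hC⟩ := hH2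
  obtain ⟨r, hrC, hr⟩ :=
    ((hblowup.eventually_gt_atTop C).and (Ioo_mem_nhdsLT zero_lt_one)).exists
  have hmean := sq_div_le_integral_norm_div_one_sub_conj_mul_sq
    (continuousOn_const.sub (continuousOn_const.mul hb_diff.continuousOn)) hε.le hnum hζ0 hr
  exact (hrC.trans_le hmean).not_ge (hC r hr)

theorem statement_13 (b : ℂ → ℂ)
    (hb_diff : DifferentiableOn ℂ b openUnitDisc)
    (hb_bound : ∀ z ∈ openUnitDisc, ‖b z‖ ≤ 1)
    (ζ0 : ℂ) (hζ0 : ‖ζ0‖ = 1)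
    (β : ℂ) (hβ : ‖β‖ ≤ 1)
    (hlim : Tendsto (fun r : ℝ => b ((r : ℂ) * ζ0)) (𝓝[Set.Ioo (0:ℝ) 1] 1) (𝓝 β))
    -- the function `z ↦ (1 - conj β * b z)/(1 - conj ζ₀ * z)` belongs to `H²(𝔻)`, i.e.
    -- its integral means over circles of radius `r < 1` are uniformly bounded:
    (hH2 : ∃ C : ℝ, ∀ r ∈ Set.Ioo (0:ℝ) 1,
      (∫ t in (0:ℝ)..(2 * Real.pi),
        ‖(1 - (starRingEnd ℂ) β * b ((r : ℂ) * Complex.exp (Complex.I * (t : ℂ)))) /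
          (1 - (starRingEnd ℂ) ζ0 * ((r : ℂ) * Complex.exp (Complex.I * (t : ℂ))))‖ ^ 2) ≤ C) :
    ‖β‖ = 1 :=
  statement_13_general b hb_diff hb_bound ζ0 hζ0 β hβ hH2
end
end

section
/- Let b be in the closed unit ball of H^∞(𝔻) and let I be an open arc of 𝕋. If every function f ∈ H(b) has a continuous extension to 𝔻 ∪ I, then b has a continuous extension to 𝔻 ∪ I and |b| = 1 on I; moreover, for every ζ_0 ∈ I, the functional of evaluation at ζ_0 is bounded on H(b) and its kernel function is k_{ζ_0}^b(z) = (1 − conj(b(ζ_0)) b(z))/(1 − conj(ζ_0) z). -/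
open Complex MeasureTheory Filter Set Metric Topology

noncomputable section

/-- `H²(𝔻)`, modeled as the Hilbert space of square-summable Taylor-coefficient
sequences of analytic functions on `𝔻`. -/
abbrev H2 : Type := lp (fun _ : ℕ => ℂ) 2

/-- The analytic function on `𝔻` realized by an `H²` coefficient sequence. -/
def oz (f : H2) (z : ℂ) : ℂ := ∑' n : ℕ, f n * z ^ n

-- For `y` in the range of `R`, the unique preimage of `y` under `R` which is orthogonal
-- to `ker R` (junk value `0` if `y ∉ range R`).
open Classical in
def Qmap {E : Type*} [NormedAddCommGroup E] [InnerProductSpace ℂ E] [CompleteSpace E]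
    (R : E →L[ℂ] E) (y : E) : E :=
  if h : ∃ u, R u = y then (((LinearMap.ker (R : E →ₗ[ℂ] E))ᗮ).orthogonalProjectionOnto h.choose : E) else 0

/-- The de Branges--Rovnyak inner product `⟨x, y⟩_b` (linear in `x`, conjugate-linear
in `y`), determined by `⟨R f, R g⟩_b = ⟨f, g⟩₂` for `f, g ⊥ ker R`, where
`R = (Id - T_b T_{conj b})^{1/2}`. -/
def dbInner {E : Type*} [NormedAddCommGroup E] [InnerProductSpace ℂ E] [CompleteSpace E]
    (R : E →L[ℂ] E) (x y : E) : ℂ := inner ℂ (Qmap R y) (Qmap R x)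

/-- The de Branges--Rovnyak norm `‖x‖_b`. -/
def dbNorm {E : Type*} [NormedAddCommGroup E] [InnerProductSpace ℂ E] [CompleteSpace E]
    (R : E →L[ℂ] E) (x : E) : ℝ := ‖Qmap R x‖

/-- The adjoint `X*` of `X := S*|H(b)`, given by Sarason's formula
`X* h = S h - ⟨h, S* b⟩_b • b`, where `S` is the forward shift on `H²`, `R` is
`(Id - T_b T_{conj b})^{1/2}` and `bv` is `b` viewed as an element of `H²`. -/
def Xstar (R S : H2 →L[ℂ] H2) (bv : H2) (h : H2) : H2 :=
  S h - dbInner R h (ContinuousLinearMap.adjoint S bv) • bv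

/-- `∂^N k_z^b / ∂ z̄^N (w)` : the `N`-th derivative, in the conjugate variable `z̄`, of the
reproducing kernel `k_z^b(w) = (1 - conj (b z) * b w) / (1 - conj z * w)` of `H(b)`. -/
def kD (b : ℂ → ℂ) (N : ℕ) (z w : ℂ) : ℂ :=
  iteratedDeriv N
    (fun u => (1 - (starRingEnd ℂ) (b ((starRingEnd ℂ) u)) * b w) / (1 - u * w))
    ((starRingEnd ℂ) z)

/-- An (nonempty) open arc of the unit circle `𝕋`. -/
def IsOpenArc (I : Set ℂ) : Prop :=
  ∃ α β : ℝ, α < β ∧ I = (fun t : ℝ => Complex.exp (Complex.I * (t : ℂ))) '' Set.Ioo α β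


/-! Fix `ζ₀ ∈ I` and let `w_j → ζ₀` radially. With `k_w` the Szegő kernel,
`(R u)(w_j) = ⟪R k_{w_j}, u⟫`, and the continuous extension of `R u` makes this converge for
every `u`; by the uniform boundedness principle the weakly Cauchy sequence `R k_{w_j}` has a weak
limit `κ`, and `R κ` represents evaluation at `ζ₀` on `H(b)`. Pairing `κ` with `R k_z` and using
`R² k_z = k_z^b` gives the formula for `k_{ζ₀}^b`; the extension of `R² k_w = k_w^b` for some `w`
with `b(w) ≠ 0` also extends `b` (if `b = 0` on `𝔻`, then `0` extends it). Finally
`(1 - conj ζ₀ w_j) k_{ζ₀}^b(w_j)` tends to `0`, as `k_{ζ₀}^b(w_j) → ⟪κ, κ⟫`, and to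
`1 - |b(ζ₀)|²`. -/

theorem exists_tendsto_inner_of_forall_exists_tendsto {𝕜 E : Type*} [RCLike 𝕜]
    [NormedAddCommGroup E] [InnerProductSpace 𝕜 E] [CompleteSpace E] (v : ℕ → E)
    (h : ∀ u, ∃ L, Tendsto (fun j => inner 𝕜 (v j) u) atTop (𝓝 L)) :
    ∃ κ : E, ∀ u, Tendsto (fun j => inner 𝕜 (v j) u) atTop (𝓝 (inner 𝕜 κ u)) := by
  choose L hL using h
  let Λ : StrongDual 𝕜 E :=
    continuousLinearMapOfTendsto (fun j => innerSL 𝕜 (v j)) (tendsto_pi_nhds.2 hL)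
  refine ⟨(InnerProductSpace.toDual 𝕜 E).symm Λ, fun u => ?_⟩
  rw [InnerProductSpace.toDual_symm_apply]
  exact hL u

lemma one_sub_ne_zero_of_norm_lt_one {x : ℂ} (hx : ‖x‖ < 1) : 1 - x ≠ 0 :=
  sub_ne_zero.2 fun h => by simp [← h] at hx

section Qmap

variable {E : Type*} [NormedAddCommGroup E] [InnerProductSpace ℂ E] [CompleteSpace E]
  (R : E →L[ℂ] E)

lemma Qmap_apply (u : E) :
    Qmap R (R u) = (LinearMap.ker (R : E →ₗ[ℂ] E))ᗮ.starProjection u := by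
  have hu : ∃ v, R v = R u := ⟨u, rfl⟩
  rw [Qmap, dif_pos hu, ← Submodule.starProjection_apply, ← sub_eq_zero, ← map_sub,
    Submodule.starProjection_apply_eq_zero_iff]
  refine Submodule.le_orthogonal_orthogonal _ ?_
  rw [LinearMap.mem_ker, ContinuousLinearMap.coe_coe, map_sub, hu.choose_spec, sub_self]

lemma dbInner_apply_apply {κ : E} (hκ : κ ∈ (LinearMap.ker (R : E →ₗ[ℂ] E))ᗮ) (u : E) :
    dbInner R (R u) (R κ) = inner ℂ κ u := by
  rw [dbInner, Qmap_apply, Qmap_apply, Submodule.starProjection_eq_self_iff.2 hκ,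
    ← Submodule.inner_starProjection_left_eq_right, Submodule.starProjection_eq_self_iff.2 hκ]

lemma norm_dbInner_le (x y : E) : ‖dbInner R x y‖ ≤ dbNorm R y * dbNorm R x :=
  norm_inner_le_norm _ _

end Qmap

lemma mem_openUnitDisc {z : ℂ} : z ∈ openUnitDisc ↔ ‖z‖ < 1 := by
  simp [openUnitDisc]

lemma memℓp_conj_pow {w : ℂ} (hw : ‖w‖ < 1) : Memℓp (fun n : ℕ => starRingEnd ℂ w ^ n) 2 := by
  refine memℓp_gen ?_
  simp only [norm_pow, Complex.norm_conj, ENNReal.toReal_ofNat, Real.rpow_two, ← pow_mul]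
  simp_rw [pow_mul']
  exact summable_geometric_of_lt_one (by positivity) (by nlinarith [norm_nonneg w])

def szegoKernel {w : ℂ} (hw : ‖w‖ < 1) : H2 := ⟨_, memℓp_conj_pow hw⟩

lemma oz_eq_inner_szegoKernel (f : H2) {w : ℂ} (hw : ‖w‖ < 1) :
    oz f w = inner ℂ (szegoKernel hw) f := by
  rw [lp.inner_eq_tsum, oz]
  refine tsum_congr fun n => ?_
  simp [szegoKernel, mul_comm]

lemma oz_szegoKernel {w z : ℂ} (hw : ‖w‖ < 1) (hz : ‖z‖ < 1) :
    oz (szegoKernel hw) z = (1 - starRingEnd ℂ w * z)⁻¹ := by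
  simp only [oz, szegoKernel, ← mul_pow]
  refine tsum_geometric_of_norm_lt_one ?_
  rw [norm_mul, Complex.norm_conj]
  nlinarith [norm_nonneg w, norm_nonneg z]

lemma adjoint_szegoKernel {b : ℂ → ℂ} {Tb : H2 →L[ℂ] H2}
    (hTb : ∀ f : H2, ∀ z ∈ openUnitDisc, oz (Tb f) z = b z * oz f z) {w : ℂ} (hw : ‖w‖ < 1) :
    ContinuousLinearMap.adjoint Tb (szegoKernel hw) = starRingEnd ℂ (b w) • szegoKernel hw := by
  refine ext_inner_right ℂ fun f => ?_
  rw [ContinuousLinearMap.adjoint_inner_left, inner_smul_left, ← oz_eq_inner_szegoKernel,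
    ← oz_eq_inner_szegoKernel, hTb f w (mem_openUnitDisc.2 hw), Complex.conj_conj]

lemma oz_sq_szegoKernel {b : ℂ → ℂ} {Tb R : H2 →L[ℂ] H2}
    (hTb : ∀ f : H2, ∀ z ∈ openUnitDisc, oz (Tb f) z = b z * oz f z)
    (hRsq : R ∘L R = 1 - Tb ∘L ContinuousLinearMap.adjoint Tb) {w z : ℂ} (hw : ‖w‖ < 1)
    (hz : ‖z‖ < 1) :
    oz (R (R (szegoKernel hw))) z =
      (1 - starRingEnd ℂ (b w) * b z) / (1 - starRingEnd ℂ w * z) := by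
  have hRR : R (R (szegoKernel hw)) =
      szegoKernel hw - starRingEnd ℂ (b w) • Tb (szegoKernel hw) := by
    simpa [adjoint_szegoKernel hTb hw] using congrArg (· (szegoKernel hw)) hRsq
  rw [hRR, oz_eq_inner_szegoKernel _ hz, inner_sub_right, inner_smul_right,
    ← oz_eq_inner_szegoKernel _ hz, ← oz_eq_inner_szegoKernel _ hz, hTb _ _ (mem_openUnitDisc.2 hz),
    oz_szegoKernel hw hz]
  ring

lemma exists_continuousOn_eqOn_symbol {b : ℂ → ℂ} {Tb R : H2 →L[ℂ] H2} {s : Set ℂ}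
    (hTb : ∀ f : H2, ∀ z ∈ openUnitDisc, oz (Tb f) z = b z * oz f z)
    (hRsq : R ∘L R = 1 - Tb ∘L ContinuousLinearMap.adjoint Tb)
    (hext : ∀ u, ∃ g : ℂ → ℂ, ContinuousOn g s ∧ Set.EqOn g (oz (R u)) openUnitDisc) :
    ∃ gb : ℂ → ℂ, ContinuousOn gb s ∧ Set.EqOn gb b openUnitDisc := by
  by_cases hb : ∀ w ∈ openUnitDisc, b w = 0
  · exact ⟨0, continuousOn_const, fun w hw => (hb w hw).symm⟩
  push Not at hb
  obtain ⟨w, hw, hbw⟩ := hb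
  rw [mem_openUnitDisc] at hw
  obtain ⟨g, hg, hge⟩ := hext (R (szegoKernel hw))
  refine ⟨fun z => (1 - g z * (1 - starRingEnd ℂ w * z)) / starRingEnd ℂ (b w),
    (continuousOn_const.sub (hg.mul (by fun_prop))).div_const _, fun z hz => ?_⟩
  have hz' := mem_openUnitDisc.1 hz
  have hden : 1 - starRingEnd ℂ w * z ≠ 0 := one_sub_ne_zero_of_norm_lt_one <| by
    rw [norm_mul, Complex.norm_conj]; nlinarith [norm_nonneg w, norm_nonneg z]
  have hbw' : starRingEnd ℂ (b w) ≠ 0 := by simpa using hbw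
  simp only [hge hz, oz_sq_szegoKernel hTb hRsq hw hz']
  field_simp
  ring

def radialSeq (ζ : ℂ) (j : ℕ) : ℂ := (j / (j + 1) : ℂ) * ζ

lemma norm_radialSeq_lt_one {ζ : ℂ} (hζ : ‖ζ‖ ≤ 1) (j : ℕ) : ‖radialSeq ζ j‖ < 1 := by
  have hj : ‖(j / (j + 1) : ℂ)‖ < 1 := by
    rw [norm_div, show ((j : ℂ) + 1) = ((j + 1 : ℕ) : ℂ) by push_cast; ring, Complex.norm_natCast,
      Complex.norm_natCast, div_lt_one (by positivity)]
    exact_mod_cast j.lt_succ_self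
  rw [radialSeq, norm_mul]
  nlinarith [norm_nonneg ζ, norm_nonneg (j / (j + 1) : ℂ)]

lemma tendsto_radialSeq (ζ : ℂ) : Tendsto (radialSeq ζ) atTop (𝓝 ζ) := by
  unfold radialSeq
  simpa using (tendsto_natCast_div_add_atTop (1 : ℂ)).mul_const ζ

lemma tendsto_comp_radialSeq {g h : ℂ → ℂ} {ζ : ℂ} (hζ : ‖ζ‖ ≤ 1)
    (hg : ContinuousWithinAt g openUnitDisc ζ) (hgh : Set.EqOn g h openUnitDisc) :
    Tendsto (fun j => h (radialSeq ζ j)) atTop (𝓝 (g ζ)) := by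
  have hmem : ∀ j, radialSeq ζ j ∈ openUnitDisc := fun j =>
    mem_openUnitDisc.2 (norm_radialSeq_lt_one hζ j)
  refine (hg.tendsto.comp (tendsto_nhdsWithin_iff.2
    ⟨tendsto_radialSeq ζ, Eventually.of_forall hmem⟩)).congr fun j => hgh (hmem j)

lemma IsOpenArc.norm_eq_one {I : Set ℂ} (hI : IsOpenArc I) {ζ : ℂ} (hζ : ζ ∈ I) : ‖ζ‖ = 1 := by
  obtain ⟨α, β, -, rfl⟩ := hI
  obtain ⟨t, -, rfl⟩ := hζ
  simp

section BoundaryKernel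

variable {b : ℂ → ℂ} {Tb R : H2 →L[ℂ] H2} {w : ℕ → ℂ} {κ : H2}

lemma exists_tendsto_oz_inner (hw : ∀ j, ‖w j‖ < 1)
    (h : ∀ u, ∃ L, Tendsto (fun j => oz (R u) (w j)) atTop (𝓝 L)) :
    ∃ κ : H2, ∀ u, Tendsto (fun j => oz (R u) (w j)) atTop (𝓝 (inner ℂ κ u)) := by
  have hoz : ∀ u j,
      oz (R u) (w j) = inner ℂ (ContinuousLinearMap.adjoint R (szegoKernel (hw j))) u :=
    fun u j => by rw [ContinuousLinearMap.adjoint_inner_left, oz_eq_inner_szegoKernel]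
  simp_rw [hoz] at h ⊢
  exact exists_tendsto_inner_of_forall_exists_tendsto _ h

lemma mem_ker_orthogonal_of_tendsto_inner
    (hκ : ∀ u, Tendsto (fun j => oz (R u) (w j)) atTop (𝓝 (inner ℂ κ u))) :
    κ ∈ (LinearMap.ker (R : H2 →ₗ[ℂ] H2))ᗮ := by
  refine (Submodule.mem_orthogonal' _ _).2 fun u hu => tendsto_nhds_unique (hκ u) ?_
  have hRu : R u = 0 := hu
  simp [hRu, oz]

lemma oz_eq_of_tendsto_inner {ζ β : ℂ}
    (hTb : ∀ f : H2, ∀ z ∈ openUnitDisc, oz (Tb f) z = b z * oz f z)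
    (hRsq : R ∘L R = 1 - Tb ∘L ContinuousLinearMap.adjoint Tb) (hR : IsSelfAdjoint R)
    (hwζ : Tendsto w atTop (𝓝 ζ)) (hζ : ‖ζ‖ ≤ 1) (hb : Tendsto (fun j => b (w j)) atTop (𝓝 β))
    (hw : ∀ j, ‖w j‖ < 1)
    (hκ : ∀ u, Tendsto (fun j => oz (R u) (w j)) atTop (𝓝 (inner ℂ κ u))) {z : ℂ}
    (hz : ‖z‖ < 1) :
    oz (R κ) z = (1 - starRingEnd ℂ β * b z) / (1 - starRingEnd ℂ ζ * z) := by
  have hden : 1 - starRingEnd ℂ z * ζ ≠ 0 := one_sub_ne_zero_of_norm_lt_one <| by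
    rw [norm_mul, Complex.norm_conj]; nlinarith [norm_nonneg z, norm_nonneg ζ]
  have hlim : Tendsto (fun j => oz (R (R (szegoKernel hz))) (w j)) atTop
      (𝓝 ((1 - starRingEnd ℂ (b z) * β) / (1 - starRingEnd ℂ z * ζ))) := by
    simp_rw [oz_sq_szegoKernel hTb hRsq hz (hw _)]
    exact (tendsto_const_nhds.sub (hb.const_mul _)).div
      (tendsto_const_nhds.sub (hwζ.const_mul _)) hden
  rw [oz_eq_inner_szegoKernel _ hz, ← hR.adjoint_eq, ContinuousLinearMap.adjoint_inner_right,
    ← inner_conj_symm, tendsto_nhds_unique (hκ _) hlim]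
  simp only [map_div₀, map_sub, map_mul, map_one, Complex.conj_conj]
  ring

lemma norm_eq_one_of_tendsto_inner {ζ β : ℂ}
    (hTb : ∀ f : H2, ∀ z ∈ openUnitDisc, oz (Tb f) z = b z * oz f z)
    (hRsq : R ∘L R = 1 - Tb ∘L ContinuousLinearMap.adjoint Tb) (hR : IsSelfAdjoint R)
    (hwζ : Tendsto w atTop (𝓝 ζ)) (hζ : ‖ζ‖ = 1) (hb : Tendsto (fun j => b (w j)) atTop (𝓝 β))
    (hw : ∀ j, ‖w j‖ < 1)
    (hκ : ∀ u, Tendsto (fun j => oz (R u) (w j)) atTop (𝓝 (inner ℂ κ u))) :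
    ‖β‖ = 1 := by
  have hζζ : starRingEnd ℂ ζ * ζ = 1 := by simp [Complex.conj_mul', hζ]
  have hzero : Tendsto (fun j => oz (R κ) (w j) * (1 - starRingEnd ℂ ζ * w j)) atTop (𝓝 0) := by
    simpa [hζζ] using
      (hκ κ).mul ((tendsto_const_nhds (x := (1 : ℂ))).sub (hwζ.const_mul (starRingEnd ℂ ζ)))
  have hval : ∀ j, oz (R κ) (w j) * (1 - starRingEnd ℂ ζ * w j) = 1 - starRingEnd ℂ β * b (w j) :=
    fun j => by
      rw [oz_eq_of_tendsto_inner hTb hRsq hR hwζ hζ.le hb hw hκ (hw j), div_mul_cancel₀]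
      refine one_sub_ne_zero_of_norm_lt_one ?_
      rw [norm_mul, Complex.norm_conj, hζ, one_mul]
      exact hw j
  have hlim := tendsto_nhds_unique (hzero.congr hval) (tendsto_const_nhds.sub (hb.const_mul _))
  rw [eq_comm, sub_eq_zero, Complex.conj_mul', eq_comm] at hlim
  have hsq : ‖β‖ ^ 2 = 1 := by exact_mod_cast hlim
  exact (pow_eq_one_iff_of_nonneg (norm_nonneg β) two_ne_zero).1 hsq

end BoundaryKernel

theorem statement_16_general
    (b : ℂ → ℂ)
    -- `Tb` is the Toeplitz operator `T_b` on `H²` (for the analytic symbol `b` it is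
    -- multiplication by `b`), and `R = (Id - T_b T_{conj b})^{1/2}` is the positive square
    -- root of `Id - T_b T_b*`, so that `H(b) = R(H²) = Set.range R`:
    (Tb : H2 →L[ℂ] H2)
    (hTb : ∀ f : H2, ∀ z ∈ openUnitDisc, oz (Tb f) z = b z * oz f z)
    (R : H2 →L[ℂ] H2) (hRpos : R.IsPositive)
    (hRsq : R ∘L R = 1 - Tb ∘L ContinuousLinearMap.adjoint Tb)
    (I : Set ℂ) (hI : IsOpenArc I)
    (hcont : ∀ f ∈ Set.range ⇑R, ∃ g : ℂ → ℂ,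
      ContinuousOn g (openUnitDisc ∪ I) ∧ Set.EqOn g (oz f) openUnitDisc) :
    ∃ gb : ℂ → ℂ, ContinuousOn gb (openUnitDisc ∪ I) ∧ Set.EqOn gb b openUnitDisc ∧
      (∀ z ∈ I, ‖gb z‖ = 1) ∧
      ∀ ζ0 ∈ I, ∃ k ∈ Set.range ⇑R,
        -- `k` is the kernel function `k_{ζ0}^b(z) = (1 - conj (b ζ0) * b z)/(1 - conj ζ0 * z)`:
        (∀ w ∈ openUnitDisc,
          oz k w = (1 - (starRingEnd ℂ) (gb ζ0) * b w) / (1 - (starRingEnd ℂ) ζ0 * w)) ∧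
        -- the evaluation functional at `ζ0` is bounded on `H(b)`, induced by `k`:
        ∃ C : ℝ, ∀ f ∈ Set.range ⇑R, ∀ gf : ℂ → ℂ,
          ContinuousOn gf (openUnitDisc ∪ I) → Set.EqOn gf (oz f) openUnitDisc →
          ‖gf ζ0‖ ≤ C * dbNorm R f ∧ gf ζ0 = dbInner R f k := by
  have hext (u : H2) := hcont (R u) ⟨u, rfl⟩
  obtain ⟨gb, hgb, hgbb⟩ := exists_continuousOn_eqOn_symbol hTb hRsq hext
  refine ⟨gb, hgb, hgbb, forall₂_and.1 fun ζ0 hζ0 => ?_⟩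
  have hζ := hI.norm_eq_one hζ0
  have hw := norm_radialSeq_lt_one hζ.le
  have hlim {g h : ℂ → ℂ} (hg : ContinuousOn g (openUnitDisc ∪ I))
      (hgh : Set.EqOn g h openUnitDisc) :
      Tendsto (fun j => h (radialSeq ζ0 j)) atTop (𝓝 (g ζ0)) :=
    tendsto_comp_radialSeq hζ.le ((hg ζ0 (Or.inr hζ0)).mono subset_union_left) hgh
  obtain ⟨κ, hκ⟩ := exists_tendsto_oz_inner hw fun u =>
    let ⟨g, hg, hgu⟩ := hext u; ⟨g ζ0, hlim hg hgu⟩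
  have hb := hlim hgb hgbb
  have hR := hRpos.isSelfAdjoint
  refine ⟨norm_eq_one_of_tendsto_inner hTb hRsq hR (tendsto_radialSeq ζ0) hζ hb hw hκ,
    R κ, ⟨κ, rfl⟩,
    fun z hz => oz_eq_of_tendsto_inner hTb hRsq hR (tendsto_radialSeq ζ0) hζ.le hb hw hκ
      (mem_openUnitDisc.1 hz), dbNorm R (R κ), ?_⟩
  rintro _ ⟨u, rfl⟩ gf hgf hgfu
  have hval : gf ζ0 = dbInner R (R u) (R κ) := by
    rw [dbInner_apply_apply R (mem_ker_orthogonal_of_tendsto_inner hκ)]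
    exact tendsto_nhds_unique (hlim hgf hgfu) (hκ u)
  exact ⟨hval ▸ norm_dbInner_le R _ _, hval⟩

theorem statement_16
    (b : ℂ → ℂ)
    (hb_diff : DifferentiableOn ℂ b openUnitDisc)
    (hb_bound : ∀ z ∈ openUnitDisc, ‖b z‖ ≤ 1)
    -- `Tb` is the Toeplitz operator `T_b` on `H²` (for the analytic symbol `b` it is
    -- multiplication by `b`), and `R = (Id - T_b T_{conj b})^{1/2}` is the positive square
    -- root of `Id - T_b T_b*`, so that `H(b) = R(H²) = Set.range R`:
    (Tb : H2 →L[ℂ] H2)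
    (hTb : ∀ f : H2, ∀ z ∈ openUnitDisc, oz (Tb f) z = b z * oz f z)
    (R : H2 →L[ℂ] H2) (hRpos : R.IsPositive)
    (hRsq : R ∘L R = 1 - Tb ∘L ContinuousLinearMap.adjoint Tb)
    (I : Set ℂ) (hI : IsOpenArc I)
    (hcont : ∀ f ∈ Set.range ⇑R, ∃ g : ℂ → ℂ,
      ContinuousOn g (openUnitDisc ∪ I) ∧ Set.EqOn g (oz f) openUnitDisc) :
    ∃ gb : ℂ → ℂ, ContinuousOn gb (openUnitDisc ∪ I) ∧ Set.EqOn gb b openUnitDisc ∧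
      (∀ z ∈ I, ‖gb z‖ = 1) ∧
      ∀ ζ0 ∈ I, ∃ k ∈ Set.range ⇑R,
        -- `k` is the kernel function `k_{ζ0}^b(z) = (1 - conj (b ζ0) * b z)/(1 - conj ζ0 * z)`:
        (∀ w ∈ openUnitDisc,
          oz k w = (1 - (starRingEnd ℂ) (gb ζ0) * b w) / (1 - (starRingEnd ℂ) ζ0 * w)) ∧
        -- the evaluation functional at `ζ0` is bounded on `H(b)`, induced by `k`:
        ∃ C : ℝ, ∀ f ∈ Set.range ⇑R, ∀ gf : ℂ → ℂ,
          ContinuousOn gf (openUnitDisc ∪ I) → Set.EqOn gf (oz f) openUnitDisc →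
          ‖gf ζ0‖ ≤ C * dbNorm R f ∧ gf ζ0 = dbInner R f k :=
  statement_16_general b Tb hTb R hRpos hRsq I hI hcont
end
end
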